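/- A nilpotent cyclic (right) Leibniz algebra L of dimension n > 1 has exactly one maximal subalgebra, namely its Leibniz kernel I, which has dimension n-1. -/
import Mathlib


/-- A subalgebra of a Leibniz algebra: a submodule closed under the bracket. -/
def IsSubalg {K : Type*} [Field K] {L : Type*} [AddCommGroup L] [Module K L]
    (b : L →ₗ[K] L →ₗ[K] L) (S : Submodule K L) : Prop :=
  ∀ x ∈ S, ∀ y ∈ S, b x y ∈ S

/-- The subalgebra generated by an element. -/
def gen {K : Type*} [Field K] {L : Type*} [AddCommGroup L] [Module K L]
    (b : L →ₗ[K] L →ₗ[K] L) (x : L) : Submodule K L :=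
  sInf {S : Submodule K L | IsSubalg b S ∧ x ∈ S}

/-- Lower central series: `lcs b 0 = L`, `lcs b (k+1) = [lcs b k, L]`. -/
def lcs {K : Type*} [Field K] {L : Type*} [AddCommGroup L] [Module K L]
    (b : L →ₗ[K] L →ₗ[K] L) : ℕ → Submodule K L
  | 0 => ⊤
  | n + 1 => Submodule.span K {z : L | ∃ x ∈ lcs b n, ∃ y : L, z = b x y}

/-- A nilpotent cyclic right Leibniz algebra of dimension `n > 1` has exactly one
maximal subalgebra, namely its Leibniz kernel `I` (every proper subalgebra is
contained in `I`), and `I` has dimension `n - 1`. -/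
theorem nilpotent_cyclic_unique_maximal {K : Type*} [Field K] {L : Type*}
    [AddCommGroup L] [Module K L] [FiniteDimensional K L]
    (b : L →ₗ[K] L →ₗ[K] L)
    (hb : ∀ x y z : L, b x (b y z) = b (b x y) z - b (b x z) y)
    (hnilp : ∃ k : ℕ, lcs b k = ⊥)
    (n : ℕ) (hn : 1 < n) (hdim : Module.finrank K L = n)
    (x : L) (hgen : gen b x = ⊤) :
    IsSubalg b (Submodule.span K {w : L | ∃ y : L, w = b y y}) ∧
    Submodule.span K {w : L | ∃ y : L, w = b y y} ≠ ⊤ ∧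
    (∀ S : Submodule K L, IsSubalg b S → S ≠ ⊤ →
      S ≤ Submodule.span K {w : L | ∃ y : L, w = b y y}) ∧
    Module.finrank K (Submodule.span K {w : L | ∃ y : L, w = b y y}) = n - 1 := by
  classical
  set I : Submodule K L := Submodule.span K {w : L | ∃ y : L, w = b y y} with hIdef
  set R : L →ₗ[K] L := b.flip x with hRdef
  have hR : ∀ z : L, R z = b z x := fun z => rfl
  have hpow : ∀ k : ℕ, (R ^ (k+1)) x = b ((R ^ k) x) x := by
    intro k; rw [pow_succ']; rfl
  have hsq : ∀ u y : L, b u (b y y) = 0 := by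
    intro u y; rw [hb]; exact sub_self _
  -- right multiplication by higher powers vanishes
  have hkill : ∀ k : ℕ, ∀ u : L, b u ((R ^ (k+1)) x) = 0 := by
    intro k
    induction k with
    | zero =>
      intro u
      have h1 : (R ^ 1) x = b x x := by rw [hpow 0]; simp
      rw [h1]; exact hsq u x
    | succ k ih =>
      intro u
      rw [hpow (k+1), hb, ih u, ih (b u x)]
      simp
  -- J = span of higher powers
  set J : Submodule K L := Submodule.span K (Set.range fun k : ℕ => (R ^ (k+1)) x) with hJdef
  have hJkill : ∀ u : L, ∀ v ∈ J, b u v = 0 := by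
    intro u v hv
    have hle : J ≤ LinearMap.ker (b u) := by
      rw [hJdef, Submodule.span_le]
      rintro _ ⟨k, rfl⟩; beta_reduce
      exact LinearMap.mem_ker.mpr (hkill k u)
    exact LinearMap.mem_ker.mp (hle hv)
  -- S0 = span of all powers = ⊤
  set S0 : Submodule K L := Submodule.span K (Set.range fun k : ℕ => (R ^ k) x) with hS0def
  have hxS0 : x ∈ S0 := by
    rw [hS0def]
    exact Submodule.subset_span ⟨0, by simp⟩
  have hS0R : ∀ v ∈ S0, R v ∈ S0 := by
    intro v hv
    have hle : S0 ≤ Submodule.comap R S0 := by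
      rw [hS0def, Submodule.span_le]
      rintro _ ⟨k, rfl⟩; beta_reduce
      have h1 : R ((R ^ k) x) = (R ^ (k+1)) x := by rw [pow_succ']; rfl
      simp only [SetLike.mem_coe, Submodule.mem_comap, h1]
      exact Submodule.subset_span ⟨k+1, rfl⟩
    exact hle hv
  have hS0sub : IsSubalg b S0 := by
    intro u hu v hv
    have hle : S0 ≤ Submodule.comap (b u) S0 := by
      rw [hS0def, Submodule.span_le]
      rintro _ ⟨k, rfl⟩; beta_reduce
      simp only [SetLike.mem_coe, Submodule.mem_comap]
      cases k with
      | zero =>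
        have h1 : (R ^ 0) x = x := by simp
        rw [h1, ← hR u]
        exact hS0R u hu
      | succ k =>
        rw [hkill k u]
        exact Submodule.zero_mem S0
    exact hle hv
  have hS0top : S0 = ⊤ :=
    le_antisymm le_top (hgen ▸ sInf_le ⟨hS0sub, hxS0⟩)
  -- nilpotency : R^m x = 0
  have hmemlcs : ∀ k : ℕ, (R ^ k) x ∈ lcs b k := by
    intro k
    induction k with
    | zero => simp [lcs]
    | succ k ih =>
      rw [hpow k]
      exact Submodule.subset_span ⟨(R ^ k) x, ih, x, rfl⟩
  obtain ⟨m, hm⟩ := hnilp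
  have hxm : (R ^ m) x = 0 := by
    have h := hmemlcs m
    rw [hm] at h
    simpa using h
  have hRge : ∀ j, m ≤ j → (R ^ j) x = 0 := by
    intro j hj
    obtain ⟨t, rfl⟩ := Nat.exists_eq_add_of_le hj
    rw [add_comm, pow_add, Module.End.mul_apply, hxm, map_zero]
  have hRm0 : ∀ v : L, (R ^ m) v = 0 := by
    intro v
    have hle : S0 ≤ LinearMap.ker (R ^ m) := by
      rw [hS0def, Submodule.span_le]
      rintro _ ⟨k, rfl⟩; beta_reduce
      have h1 : (R ^ m) ((R ^ k) x) = (R ^ (m + k)) x := by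
        rw [pow_add, Module.End.mul_apply]
      exact LinearMap.mem_ker.mpr (by rw [h1]; exact hRge _ (Nat.le_add_right _ _))
    exact LinearMap.mem_ker.mp (hle (hS0top ▸ Submodule.mem_top))
  -- R maps everything into J
  have hRall : ∀ v : L, R v ∈ J := by
    intro v
    have hle : S0 ≤ Submodule.comap R J := by
      rw [hS0def, Submodule.span_le]
      rintro _ ⟨k, rfl⟩; beta_reduce
      have h1 : R ((R ^ k) x) = (R ^ (k+1)) x := by rw [pow_succ']; rfl
      simp only [SetLike.mem_coe, Submodule.mem_comap, h1]
      exact Submodule.subset_span ⟨k, rfl⟩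
    exact hle (hS0top ▸ Submodule.mem_top)
  -- decomposition : ⊤ = span{x} ⊔ J
  have htop : Submodule.span K {x} ⊔ J = ⊤ := by
    refine le_antisymm le_top ?_
    rw [← hS0top, hS0def, Submodule.span_le]
    rintro _ ⟨k, rfl⟩; beta_reduce
    cases k with
    | zero =>
      have h1 : (R ^ 0) x = x := by simp
      rw [h1]
      exact Submodule.mem_sup_left (Submodule.mem_span_singleton_self x)
    | succ k =>
      exact Submodule.mem_sup_right (by rw [hJdef]; exact Submodule.subset_span ⟨k, rfl⟩)
  have hdecomp : ∀ y : L, ∃ c : K, y - c • x ∈ J := by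
    intro y
    have hy : y ∈ Submodule.span K {x} ⊔ J := htop ▸ Submodule.mem_top
    obtain ⟨p, hp, q, hq, rfl⟩ := Submodule.mem_sup.mp hy
    obtain ⟨c, rfl⟩ := Submodule.mem_span_singleton.mp hp
    exact ⟨c, by simpa using hq⟩
  -- I = J
  have hJleI : J ≤ I := by
    rw [hJdef, Submodule.span_le]
    rintro _ ⟨k, rfl⟩; beta_reduce
    cases k with
    | zero =>
      have h1 : (R ^ (0+1)) x = b x x := by rw [hpow 0]; simp
      rw [h1]
      exact Submodule.subset_span ⟨x, rfl⟩
    | succ k =>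
      have h1 : (R ^ (k+1+1)) x = b ((R ^ (k+1)) x) x := hpow (k+1)
      have hexp : b (x + (R ^ (k+1)) x) (x + (R ^ (k+1)) x)
          = b x x + (R ^ (k+1+1)) x := by
        simp only [map_add, LinearMap.add_apply]
        rw [hkill k x, hkill k ((R ^ (k+1)) x), ← h1]
        abel
      have h2 : (R ^ (k+1+1)) x
          = b (x + (R ^ (k+1)) x) (x + (R ^ (k+1)) x) - b x x := by
        rw [hexp]; abel
      rw [h2]
      exact sub_mem (Submodule.subset_span ⟨_, rfl⟩) (Submodule.subset_span ⟨x, rfl⟩)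
  have hIleJ : I ≤ J := by
    rw [hIdef, Submodule.span_le]
    rintro _ ⟨y, rfl⟩; beta_reduce
    obtain ⟨c, hc⟩ := hdecomp y
    have h3 : b y y = c • R y := by
      have h4 : b y y = b y (y - c • x) + c • b y x := by
        rw [map_sub, map_smul]; abel
      rw [h4, hJkill y _ hc, hR, zero_add]
    rw [h3]
    exact Submodule.smul_mem _ c (hRall y)
  have hIJ : I = J := le_antisymm hIleJ hJleI
  -- I ≠ ⊤
  have hJmap : Submodule.map R ⊤ = J := by
    rw [← hS0top, hS0def, Submodule.map_span]
    apply le_antisymm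
    · rw [Submodule.span_le]
      rintro _ ⟨_, ⟨k, rfl⟩, rfl⟩; beta_reduce
      have h1 : R ((R ^ k) x) = (R ^ (k+1)) x := by rw [pow_succ']; rfl
      rw [SetLike.mem_coe, h1, hJdef]
      exact Submodule.subset_span ⟨k, rfl⟩
    · rw [hJdef, Submodule.span_le]
      rintro _ ⟨k, rfl⟩; beta_reduce
      refine Submodule.subset_span ⟨(R ^ k) x, ⟨k, rfl⟩, ?_⟩
      show R ((R ^ k) x) = (R ^ (k+1)) x
      rw [pow_succ']; rfl
  have hInetop : I ≠ ⊤ := by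
    intro htopI
    have hJtop : J = ⊤ := by rw [← hIJ, htopI]
    have hstep : Submodule.map R ⊤ = (⊤ : Submodule K L) := by rw [hJmap, hJtop]
    have hiter : ∀ k : ℕ, Submodule.map (R ^ k) ⊤ = (⊤ : Submodule K L) := by
      intro k
      induction k with
      | zero => rw [pow_zero, Module.End.one_eq_id, Submodule.map_id]
      | succ k ih =>
        rw [pow_succ, Module.End.mul_eq_comp, Submodule.map_comp, hstep, ih]
    have hbot : (⊤ : Submodule K L) = ⊥ := by
      have h0 : (R ^ m) = (0 : L →ₗ[K] L) := LinearMap.ext hRm0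
      rw [← hiter m, h0, Submodule.map_zero]
    have hL0 : ∀ v : L, v = 0 := by
      intro v
      have : v ∈ (⊥ : Submodule K L) := hbot ▸ Submodule.mem_top
      simpa using this
    have hss : Subsingleton L := ⟨fun a c => by rw [hL0 a, hL0 c]⟩
    have h0 : Module.finrank K L = 0 := Module.finrank_zero_of_subsingleton
    rw [hdim] at h0; omega
  have hxnotI : x ∉ I := by
    intro hx
    apply hInetop
    rw [hIJ]
    refine le_antisymm le_top ?_
    rw [← htop]
    exact sup_le (Submodule.span_le.mpr (Set.singleton_subset_iff.mpr (hIJ ▸ hx))) le_rfl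
  -- subalgebras of powers shifted
  have hPdef : ∀ t : ℕ, True := fun _ => trivial
  refine ⟨?_, hIdef ▸ hInetop, ?_, ?_⟩
  · -- IsSubalg
    intro u hu v hv
    rw [hJkill u v (hIJ ▸ hv)]
    exact Submodule.zero_mem _
  · -- maximality
    intro S hSsub hSne
    by_contra hnot
    obtain ⟨y, hyS, hyI⟩ := SetLike.not_le_iff_exists.mp hnot
    obtain ⟨c, hc⟩ := hdecomp y
    have hcne : c ≠ 0 := by
      rintro rfl
      exact hyI (hIJ ▸ (by simpa using hc))
    have hyw : y = c • x + (y - c • x) := by abel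
    have hby : ∀ u : L, b u y = c • R u := by
      intro u
      conv_lhs => rw [hyw]
      rw [map_add, map_smul, hJkill u _ hc, hR, add_zero]
    -- powers of y stay in S
    have hclaim1 : ∀ t : ℕ, (c ^ t) • ((R ^ t) y) ∈ S := by
      intro t
      induction t with
      | zero => simpa using hyS
      | succ t ih =>
        have hmem := hSsub _ ih y hyS
        have heq : b ((c ^ t) • ((R ^ t) y)) y = (c ^ (t+1)) • ((R ^ (t+1)) y) := by
          rw [map_smul, LinearMap.smul_apply, hby ((R ^ t) y), smul_smul, ← pow_succ]
          congr 1
          rw [pow_succ']; rfl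
        rwa [heq] at hmem
    -- downward induction
    have hPmem : ∀ d : ℕ, ∀ j : ℕ, m ≤ j + d → (R ^ j) x ∈ S := by
      intro d
      induction d with
      | zero =>
        intro j hj
        rw [hRge j (by omega)]
        exact Submodule.zero_mem S
      | succ d ih =>
        intro j hj
        by_cases hcase : m ≤ j + d
        · exact ih j hcase
        · -- R^j w ∈ span of R^(t+j+1) x, all in S
          have hwJ : ∀ s : ℕ, ∀ v ∈ Submodule.span K (Set.range fun t : ℕ => (R ^ (t+s)) x),
              R v ∈ Submodule.span K (Set.range fun t : ℕ => (R ^ (t+(s+1))) x) := by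
            intro s v hv
            have hle : Submodule.span K (Set.range fun t : ℕ => (R ^ (t+s)) x)
                ≤ Submodule.comap R (Submodule.span K (Set.range fun t : ℕ => (R ^ (t+(s+1))) x)) := by
              rw [Submodule.span_le]
              rintro _ ⟨t, rfl⟩; beta_reduce
              have h1 : R ((R ^ (t+s)) x) = (R ^ (t+(s+1))) x := by
                rw [show t+(s+1) = (t+s)+1 by omega, pow_succ']; rfl
              simp only [SetLike.mem_coe, Submodule.mem_comap, h1]
              exact Submodule.subset_span ⟨t, rfl⟩
            exact hle hv
          have hwmem : ∀ s : ℕ, (R ^ s) (y - c • x)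
              ∈ Submodule.span K (Set.range fun t : ℕ => (R ^ (t+(s+1))) x) := by
            intro s
            induction s with
            | zero =>
              have : J = Submodule.span K (Set.range fun t : ℕ => (R ^ (t+(0+1))) x) := by
                rw [hJdef]
              rw [pow_zero, Module.End.one_apply, ← this]
              exact hc
            | succ s ihs =>
              have h1 : (R ^ (s+1)) (y - c • x) = R ((R ^ s) (y - c • x)) := by
                rw [pow_succ']; rfl
              rw [h1]
              exact hwJ (s+1) _ ihs
          -- span generators in S
          have hspanS : Submodule.span K (Set.range fun t : ℕ => (R ^ (t+(j+1))) x) ≤ S := by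
            rw [Submodule.span_le]
            rintro _ ⟨t, rfl⟩; beta_reduce
            exact ih (t+(j+1)) (by omega)
          have hwS : (R ^ j) (y - c • x) ∈ S := hspanS (hwmem j)
          have hRy : (R ^ j) y = c • (R ^ j) x + (R ^ j) (y - c • x) := by
            conv_lhs => rw [hyw]
            rw [map_add, map_smul]
          have hmem1 : (c ^ j) • ((R ^ j) y) ∈ S := hclaim1 j
          have hmem2 : (c ^ (j+1)) • ((R ^ j) x) ∈ S := by
            have heq : (c ^ (j+1)) • ((R ^ j) x)
                = (c ^ j) • ((R ^ j) y) - (c ^ j) • ((R ^ j) (y - c • x)) := by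
              rw [hRy, smul_add, smul_smul, ← pow_succ]
              abel
            rw [heq]
            exact sub_mem hmem1 (Submodule.smul_mem S _ hwS)
          have hc' : (c ^ (j+1)) ≠ 0 := pow_ne_zero _ hcne
          have := Submodule.smul_mem S (c ^ (j+1))⁻¹ hmem2
          rwa [inv_smul_smul₀ hc'] at this
    apply hSne
    refine le_antisymm le_top ?_
    rw [← hS0top, hS0def, Submodule.span_le]
    rintro _ ⟨k, rfl⟩; beta_reduce
    exact hPmem m k (by omega)
  · -- dimension
    have hmkQtop : Submodule.span K {Submodule.Quotient.mk (p := I) x} = (⊤ : Submodule K (L ⧸ I)) := by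
      have h1 : Submodule.map I.mkQ ⊤ = (⊤ : Submodule K (L ⧸ I)) := by
        rw [Submodule.map_top, LinearMap.range_eq_top]
        exact Submodule.mkQ_surjective I
      rw [← h1, ← htop, ← hIJ, Submodule.map_sup, Submodule.mkQ_map_self, sup_bot_eq,
        Submodule.map_span, Set.image_singleton]
      rfl
    have hxbar : (Submodule.Quotient.mk (p := I) x : L ⧸ I) ≠ 0 := by
      simpa [Submodule.Quotient.mk_eq_zero] using hxnotI
    have hq1 : Module.finrank K (L ⧸ I) = 1 := by
      rw [← finrank_top K (L ⧸ I), ← hmkQtop]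
      exact finrank_span_singleton hxbar
    have hsum := Submodule.finrank_quotient_add_finrank I
    rw [hq1, hdim] at hsum
    omega
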